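/- A train-track of a rhombus tiling of the plane cannot cross itself, and two distinct train-tracks can cross at most once. -/

import Mathlib

noncomputable section
open Complex Set

/-- A rhombus in the plane `ℂ`, recorded by its four vertices in counterclockwise
cyclic order. -/
structure Rhombus where
  v : ZMod 4 → ℂ
  para : v 0 + v 2 = v 1 + v 3
  sides : ∀ i, dist (v i) (v (i + 1)) = dist (v 0) (v 1)
  nondeg : v 0 ≠ v 2 ∧ v 1 ≠ v 3

def Rhombus.center (r : Rhombus) : ℂ := (r.v 0 + r.v 2) / 2
def Rhombus.region (r : Rhombus) : Set ℂ := convexHull ℝ (Set.range r.v)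
def Rhombus.side (r : Rhombus) (i : ZMod 4) : Set ℂ := segment ℝ (r.v i) (r.v (i + 1))
def Rhombus.sideEnds (r : Rhombus) (i : ZMod 4) : Set ℂ := {r.v i, r.v (i + 1)}

/-- An edge-to-edge rhombus tiling of the whole plane, with side length 2 and
finitely many rhombus angles. -/
structure RhombusTiling where
  rhombi : Set Rhombus
  covers : ∀ p : ℂ, ∃ r ∈ rhombi, p ∈ r.region
  int_disjoint : ∀ r ∈ rhombi, ∀ r' ∈ rhombi, r ≠ r' →
    interior r.region ∩ interior r'.region = ∅
  edge_to_edge : ∀ r ∈ rhombi, ∀ r' ∈ rhombi, ∀ i j : ZMod 4,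
    ¬ (r.side i ∩ r'.side j).Subsingleton → r.sideEnds i = r'.sideEnds j
  side_two : ∀ r ∈ rhombi, dist (r.v 0) (r.v 1) = 2
  finite_angles : {d : ℝ | ∃ r ∈ rhombi, d = dist (r.v 0) (r.v 2)}.Finite

/-- `AdjSide r r' i` : the rhombi `r` and `r'` are distinct and glued along the side `i`
of `r`. -/
def AdjSide (r r' : Rhombus) (i : ZMod 4) : Prop :=
  r ≠ r' ∧ ∃ j : ZMod 4, r.sideEnds i = r'.sideEnds j

/-- A train-track of the rhombus tiling `T`: a bi-infinite path of rhombi of `T`, each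
adjacent along an edge to the previous one, which on entering a rhombus exits across
the opposite edge. -/
structure TrainTrack (T : RhombusTiling) where
  seq : ℤ → Rhombus
  mem : ∀ n, seq n ∈ T.rhombi
  straight : ∀ n : ℤ, ∃ i : ZMod 4,
    AdjSide (seq n) (seq (n - 1)) i ∧ AdjSide (seq n) (seq (n + 1)) (i + 2)

/-!
All transversal sides of a train-track are parallel to one vector `e`, and two consecutive rhombi
lie on opposite sides of their common side, so the height `im (x / e)` of the centres of its rhombi
is strictly monotone along the track: a train-track never visits a rhombus twice.

For two distinct train-tracks, join the midpoints of the consecutive transversal sides of each into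
a polygonal path. Since the tiling has finitely many angles, heights grow at a uniform rate, so the
path of the second track is the graph of a continuous function over its own height. The path of the
first track meets it exactly at the centres of the common rhombi, where the two tracks cross
transversally, and monotonicity of the first track forces it to cross always in the same direction.
The signed offset of the first path from the second is therefore increasing through each of its
zeros, so it has at most one zero.
-/

open Filter Topology

lemma ZMod.cases_four (i : ZMod 4) : i = 0 ∨ i = 1 ∨ i = 2 ∨ i = 3 := by
  revert i; decide

lemma Complex.im_div_eq_neg_im_div {a b : ℂ} (h : ‖a‖ = ‖b‖) : (a / b).im = -(b / a).im := by
  simp only [Complex.div_im, Complex.normSq_eq_norm_sq, h]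
  ring

lemma Complex.eq_or_eq_neg_of_im_div_eq_zero {a b : ℂ} (h : ‖a‖ = ‖b‖) (hb : b ≠ 0)
    (him : (a / b).im = 0) : a = b ∨ a = -b := by
  have hq : ‖a / b‖ = 1 := by rw [norm_div, h, div_self (norm_ne_zero_iff.2 hb)]
  have hre : a / b = ((a / b).re : ℂ) := Complex.ext rfl (by simp [him])
  rw [hre, Complex.norm_real, Real.norm_eq_abs] at hq
  rw [div_eq_iff hb] at hre
  rcases (abs_eq zero_le_one).1 hq with h1 | h1 <;> rw [h1] at hre <;> simp [hre]

lemma pos_mul_of_pos_mul_succ {f : ℤ → ℝ} (h : ∀ n, 0 < f n * f (n + 1)) (n : ℤ) :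
    0 < f 0 * f n := by
  have h0 : f 0 ≠ 0 := fun h0 => by simpa [h0] using h 0
  induction n using Int.induction_on with
  | zero => exact mul_self_pos.2 h0
  | succ k ih => nlinarith [h k, mul_pos ih (h k), sq_nonneg (f k)]
  | pred k ih =>
    have := h (-k - 1)
    rw [sub_add_cancel] at this
    nlinarith [mul_pos ih this, sq_nonneg (f (-k))]

section PiecewiseLinear

variable {E : Type*} [AddCommGroup E] [Module ℝ E]

/-- The polygonal path through the points `x n`, with `x (n + 1) = x n + v n`. -/
def piecewiseLinear (x v : ℤ → E) (τ : ℝ) : E := x ⌊τ⌋ + Int.fract τ • v ⌊τ⌋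

variable (x v : ℤ → E)

lemma piecewiseLinear_intCast (n : ℤ) : piecewiseLinear x v n = x n := by
  simp [piecewiseLinear]

lemma piecewiseLinear_eq {n : ℤ} {τ : ℝ} (h₁ : n ≤ τ) (h₂ : τ < n + 1) :
    piecewiseLinear x v τ = x n + (τ - n) • v n := by
  have : ⌊τ⌋ = n := Int.floor_eq_iff.2 ⟨h₁, h₂⟩
  rw [piecewiseLinear, Int.fract, this]

lemma piecewiseLinear_eq_of_mem_Icc (h : ∀ n, x (n + 1) = x n + v n) {n : ℤ} {τ : ℝ}
    (hτ : τ ∈ Icc (n : ℝ) (n + 1)) : piecewiseLinear x v τ = x n + (τ - n) • v n := by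
  rcases hτ.2.lt_or_eq with hlt | rfl
  · exact piecewiseLinear_eq x v hτ.1 hlt
  · rw [← Int.cast_one, ← Int.cast_add, piecewiseLinear_intCast, h, Int.cast_add, Int.cast_one,
      add_sub_cancel_left, one_smul]

lemma map_piecewiseLinear {F : Type*} [AddCommGroup F] [Module ℝ F] (f : E →ₗ[ℝ] F) :
    f ∘ piecewiseLinear x v = piecewiseLinear (f ∘ x) (f ∘ v) := by
  ext τ
  simp [piecewiseLinear]

lemma continuous_piecewiseLinear [TopologicalSpace E] [IsTopologicalAddGroup E]
    [ContinuousSMul ℝ E] (h : ∀ n, x (n + 1) = x n + v n) : Continuous (piecewiseLinear x v) := by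
  refine (locallyFinite_Icc_of_tendsto (f := fun n : ℤ => (n : ℝ)) (g := fun n => (n : ℝ) + 1)
    tendsto_intCast_atTop_atTop ?_).continuous ?_ (fun _ => isClosed_Icc) fun n => ?_
  · exact tendsto_atBot_add_const_right _ 1 (tendsto_intCast_atBot_iff.2 tendsto_id)
  · exact eq_univ_of_forall fun τ =>
      mem_iUnion.2 ⟨⌊τ⌋, Int.floor_le τ, (Int.lt_floor_add_one τ).le⟩
  · exact ((continuous_const.add ((continuous_id.sub continuous_const).smul
      continuous_const)).continuousOn).congr fun τ hτ => piecewiseLinear_eq_of_mem_Icc x v h hτ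

lemma strictMono_piecewiseLinear {y w : ℤ → ℝ} (h : ∀ n, y (n + 1) = y n + w n)
    (hw : ∀ n, 0 < w n) : StrictMono (piecewiseLinear y w) := by
  have hmono : Monotone y := monotone_int_of_le_succ fun n => by linarith [h n, hw n]
  intro τ τ' hlt
  simp only [piecewiseLinear, smul_eq_mul]
  rcases (Int.floor_mono hlt.le).eq_or_lt with heq | hflt
  · rw [← heq, Int.fract, Int.fract, ← heq]
    nlinarith [hw ⌊τ⌋]
  · have h₁ : y ⌊τ⌋ + Int.fract τ * w ⌊τ⌋ < y (⌊τ⌋ + 1) := by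
      rw [h]; nlinarith [hw ⌊τ⌋, Int.fract_lt_one τ]
    have h₂ : y (⌊τ⌋ + 1) ≤ y ⌊τ'⌋ := hmono (by omega)
    nlinarith [hw ⌊τ'⌋, Int.fract_nonneg τ']

lemma surjective_piecewiseLinear {y w : ℤ → ℝ} (h : ∀ n, y (n + 1) = y n + w n) {c : ℝ}
    (hc : 0 < c) (hw : ∀ n, c ≤ w n) : Function.Surjective (piecewiseLinear y w) := by
  have hmono := (strictMono_piecewiseLinear h fun n => hc.trans_le (hw n)).monotone
  have hgrowth : ∀ k : ℕ, y 0 + k * c ≤ y k ∧ y (-k) ≤ y 0 - k * c := by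
    intro k
    induction k with
    | zero => simp
    | succ k ih =>
      have h₁ := h k
      have h₂ := h (-k - 1)
      rw [sub_add_cancel] at h₂
      push_cast
      rw [neg_add, ← sub_eq_add_neg]
      constructor <;> linarith [hw k, hw (-k - 1), ih.1, ih.2]
  refine (continuous_piecewiseLinear y w h).surjective
    (tendsto_atTop_atTop_of_monotone hmono fun b => ?_)
    (tendsto_atBot_atBot_of_monotone hmono fun b => ?_)
  · obtain ⟨k, hk⟩ := exists_nat_ge ((b - y 0) / c)
    refine ⟨(k : ℤ), ?_⟩
    rw [piecewiseLinear_intCast]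
    rw [div_le_iff₀ hc] at hk
    linarith [(hgrowth k).1]
  · obtain ⟨k, hk⟩ := exists_nat_ge ((y 0 - b) / c)
    refine ⟨((-k : ℤ) : ℝ), ?_⟩
    rw [piecewiseLinear_intCast]
    rw [div_le_iff₀ hc] at hk
    linarith [(hgrowth k).2]

end PiecewiseLinear

/-- Below a second zero `b`, take the largest zero `z` before a point `c` where `f` is already
negative; just after `z` the function is positive, so it vanishes again between `z` and `c`. -/
lemma Continuous.subsingleton_zeros {f : ℝ → ℝ} (hf : Continuous f)
    (hinc : ∀ z, f z = 0 → ∃ s ∈ 𝓝 z, StrictMonoOn f s) : {z | f z = 0}.Subsingleton := by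
  have hinc' : ∀ z, f z = 0 → ∃ ε > 0, StrictMonoOn f (Ioo (z - ε) (z + ε)) := fun z hz => by
    obtain ⟨s, hs, hmono⟩ := hinc z hz
    obtain ⟨ε, hε, hball⟩ := Metric.mem_nhds_iff.1 hs
    exact ⟨ε, hε, hmono.mono (Real.ball_eq_Ioo z ε ▸ hball)⟩
  intro a (ha : f a = 0) b (hb : f b = 0)
  by_contra hab
  wlog hlt : a < b generalizing a b
  · exact this hb ha (Ne.symm hab) ((Ne.symm hab).lt_of_le (not_lt.1 hlt))
  obtain ⟨ε, hε, hmono⟩ := hinc' b hb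
  set c := max (b - ε / 2) ((a + b) / 2)
  have hac : a < c := (by linarith : a < (a + b) / 2).trans_le (le_max_right _ _)
  have hcb : c < b := max_lt (by linarith) (by linarith)
  have hc : f c < 0 := (hmono ⟨by linarith [le_max_left (b - ε / 2) ((a + b) / 2)], by linarith⟩
    ⟨by linarith, by linarith⟩ hcb).trans_eq hb
  obtain ⟨z, ⟨hzI, hz : f z = 0⟩, hzmax⟩ :=
    (isCompact_Icc.inter_right (isClosed_singleton.preimage hf)).exists_isGreatest
      ⟨a, ⟨le_rfl, hac.le⟩, ha⟩
  have hzc : z < c := hzI.2.lt_of_ne (by rintro rfl; linarith)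
  obtain ⟨δ, hδ, hmono'⟩ := hinc' z hz
  set x := min (z + δ / 2) c
  have hzx : z < x := lt_min (by linarith) hzc
  have hfx : 0 < f x := hz.symm.trans_lt (hmono' ⟨by linarith, by linarith⟩
    ⟨by linarith, (min_le_left _ _).trans_lt (by linarith)⟩ hzx)
  obtain ⟨y, hy, hy0⟩ := intermediate_value_Icc' (min_le_right _ _) hf.continuousOn
    ⟨hc.le, hfx.le⟩
  linarith [hy.1, hzmax ⟨⟨by linarith [hy.1, hzI.1], hy.2⟩, hy0⟩]

/-! ### Rhombi -/

namespace Rhombus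

variable (r : Rhombus)

def edge (i : ZMod 4) : ℂ := r.v (i + 1) - r.v i

def sideMid (i : ZMod 4) : ℂ := (r.v i + r.v (i + 1)) / 2

lemma v_add_v_add_two (i : ZMod 4) : r.v i + r.v (i + 2) = r.v (i + 1) + r.v (i + 3) := by
  rcases ZMod.cases_four i with rfl | rfl | rfl | rfl
  · exact r.para
  · show r.v 1 + r.v 3 = r.v 2 + r.v 0
    linear_combination -r.para
  · show r.v 2 + r.v 0 = r.v 3 + r.v 1
    linear_combination r.para
  · show r.v 3 + r.v 1 = r.v 0 + r.v 2
    linear_combination -r.para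

lemma v_add_one (i : ZMod 4) : r.v (i + 1) = r.v i + r.edge i := by
  rw [edge, add_sub_cancel]

lemma v_add_two (i : ZMod 4) : r.v (i + 2) = r.v i + r.edge i + r.edge (i + 1) := by
  rw [show i + 2 = i + 1 + 1 by ring, r.v_add_one (i + 1), r.v_add_one i]

lemma v_add_three (i : ZMod 4) : r.v (i + 3) = r.v i + r.edge (i + 1) := by
  rw [edge, show i + 1 + 1 = i + 2 by ring]
  linear_combination -r.v_add_v_add_two i

lemma edge_add_two (i : ZMod 4) : r.edge (i + 2) = -r.edge i := by
  rw [edge, show i + 2 + 1 = i + 3 by ring]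
  linear_combination r.v_add_three i - r.v_add_two i

lemma sideMid_add_two (i : ZMod 4) :
    r.sideMid (i + 2) = r.sideMid i + r.edge (i + 1) := by
  simp only [Rhombus.sideMid, show i + 2 + 1 = i + 3 by ring, r.v_add_two, r.v_add_three,
    r.v_add_one]
  ring

lemma center_eq_sideMid_add (i : ZMod 4) :
    r.center = r.sideMid i + r.edge (i + 1) / 2 := by
  have hdiag : r.center = (r.v i + r.v (i + 2)) / 2 := by
    rw [Rhombus.center]
    rcases ZMod.cases_four i with rfl | rfl | rfl | rfl
    · rfl
    · exact congrArg (· / 2) r.para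
    · exact congrArg (· / 2) (add_comm _ _)
    · exact congrArg (· / 2) (r.para.trans (add_comm _ _))
  rw [hdiag, r.v_add_two, Rhombus.sideMid, r.v_add_one]
  ring

lemma sideEnds_eq (i : ZMod 4) :
    r.sideEnds i = {r.sideMid i - r.edge i / 2, r.sideMid i + r.edge i / 2} := by
  rw [Rhombus.sideEnds, Rhombus.sideMid, Rhombus.edge]
  congr 1 <;> ring_nf

lemma norm_edge (i : ZMod 4) : ‖r.edge i‖ = dist (r.v 0) (r.v 1) := by
  rw [← r.sides i, dist_eq_norm, edge, norm_sub_rev]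

lemma v_ne_v_add_two (i : ZMod 4) : r.v i ≠ r.v (i + 2) := by
  rcases ZMod.cases_four i with rfl | rfl | rfl | rfl
  exacts [r.nondeg.1, r.nondeg.2, r.nondeg.1.symm, r.nondeg.2.symm]

lemma edge_ne_zero (i : ZMod 4) : r.edge i ≠ 0 := by
  intro h
  have hzero : ∀ j, r.edge j = 0 := fun j => by
    rw [← norm_eq_zero, r.norm_edge, ← r.norm_edge i, h, norm_zero]
  apply r.v_ne_v_add_two i
  rw [r.v_add_two, hzero, hzero, add_zero, add_zero]

lemma im_edge_add_one_div_edge_ne_zero (i : ZMod 4) :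
    (r.edge (i + 1) / r.edge i).im ≠ 0 := by
  intro h
  rcases Complex.eq_or_eq_neg_of_im_div_eq_zero (by rw [norm_edge, norm_edge])
    (r.edge_ne_zero i) h with h' | h'
  · apply r.v_ne_v_add_two (i + 1)
    rw [show i + 1 + 2 = i + 3 by ring, r.v_add_three, h', r.v_add_one]
  · apply r.v_ne_v_add_two i
    rw [r.v_add_two, h', add_neg_cancel_right]

lemma im_edge_add_one_div_edge (i : ZMod 4) :
    (r.edge (i + 1) / r.edge i).im = (r.edge 1 / r.edge 0).im := by
  have hsucc : ∀ j, (r.edge (j + 1 + 1) / r.edge (j + 1)).im = (r.edge (j + 1) / r.edge j).im :=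
    fun j => by
      rw [show j + 1 + 1 = j + 2 by ring, edge_add_two, neg_div, neg_im,
        Complex.im_div_eq_neg_im_div (by rw [norm_edge, norm_edge]), neg_neg]
  rcases ZMod.cases_four i with rfl | rfl | rfl | rfl
  · rfl
  · exact hsucc 0
  · exact (hsucc 1).trans (hsucc 0)
  · exact (hsucc 2).trans ((hsucc 1).trans (hsucc 0))

lemma im_edge_one_div_edge_zero_sq : (r.edge 1 / r.edge 0).im ^ 2 =
    1 - (dist (r.v 0) (r.v 2) ^ 2 / (2 * dist (r.v 0) (r.v 1) ^ 2) - 1) ^ 2 := by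
  set q := r.edge 1 / r.edge 0
  have hL : dist (r.v 0) (r.v 1) ≠ 0 := by
    rw [← r.norm_edge 0]
    exact norm_ne_zero_iff.2 (r.edge_ne_zero 0)
  have hq : q.re ^ 2 + q.im ^ 2 = 1 := by
    have : ‖q‖ = 1 := by rw [norm_div, r.norm_edge, r.norm_edge, div_self hL]
    rw [← one_pow 2, ← this, Complex.sq_norm, Complex.normSq_apply]
    ring
  have hd : dist (r.v 0) (r.v 2) = dist (r.v 0) (r.v 1) * ‖1 + q‖ := by
    rw [dist_comm, dist_eq_norm, show (2 : ZMod 4) = 0 + 2 from rfl, r.v_add_two, ← r.norm_edge 0,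
      ← norm_mul, mul_add, mul_one, mul_div_cancel₀ _ (r.edge_ne_zero 0)]
    ring_nf
  have h1q : ‖1 + q‖ ^ 2 = 2 + 2 * q.re := by
    rw [Complex.sq_norm, Complex.normSq_apply]
    simp only [Complex.add_re, Complex.one_re, Complex.add_im, Complex.one_im, zero_add]
    linear_combination hq
  rw [hd, mul_pow, h1q]
  field_simp
  linear_combination hq

def frame (i : ZMod 4) (a b : ℝ) : ℂ := r.v i + a • r.edge i + b • r.edge (i + 1)

def coordB (i : ZMod 4) (x : ℂ) : ℝ :=
  ((x - r.v i) / r.edge i).im / (r.edge (i + 1) / r.edge i).im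

def coordA (i : ZMod 4) (x : ℂ) : ℝ :=
  ((x - r.v i) / r.edge i).re - r.coordB i x * (r.edge (i + 1) / r.edge i).re

lemma frame_sub_v_div_edge (i : ZMod 4) (a b : ℝ) :
    (r.frame i a b - r.v i) / r.edge i = a + b * (r.edge (i + 1) / r.edge i) := by
  have := r.edge_ne_zero i
  simp only [frame, Complex.real_smul]
  field_simp
  ring

lemma coordB_frame (i : ZMod 4) (a b : ℝ) : r.coordB i (r.frame i a b) = b := by
  have := r.im_edge_add_one_div_edge_ne_zero i
  rw [coordB, frame_sub_v_div_edge]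
  simp only [Complex.add_im, Complex.ofReal_im, Complex.mul_im, Complex.ofReal_re, zero_add,
    zero_mul, add_zero]
  field_simp

lemma coordA_frame (i : ZMod 4) (a b : ℝ) : r.coordA i (r.frame i a b) = a := by
  rw [coordA, coordB_frame, frame_sub_v_div_edge]
  simp

lemma frame_coords (i : ZMod 4) (x : ℂ) : r.frame i (r.coordA i x) (r.coordB i x) = x := by
  have he := r.edge_ne_zero i
  have hq := r.im_edge_add_one_div_edge_ne_zero i
  have hx : (x - r.v i) / r.edge i = r.coordA i x + r.coordB i x * (r.edge (i + 1) / r.edge i) := by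
    apply Complex.ext
    · simp [coordA]
    · simp only [Complex.add_im, Complex.ofReal_im, Complex.mul_im, Complex.ofReal_re, coordB]
      field_simp
      ring
  rw [← r.frame_sub_v_div_edge, div_left_inj' he, sub_left_inj] at hx
  exact hx.symm

lemma smul_add_smul_frame {t u : ℝ} (htu : t + u = 1) (i : ZMod 4) (a b a' b' : ℝ) :
    t • r.frame i a b + u • r.frame i a' b' = r.frame i (t * a + u * a') (t * b + u * b') := by
  have htu' : (t : ℂ) + u = 1 := by exact_mod_cast htu
  simp only [frame, Complex.real_smul]
  push_cast
  linear_combination r.v i * htu'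

lemma frame_zero_zero (i : ZMod 4) : r.frame i 0 0 = r.v i := by simp [frame]

lemma frame_one_zero (i : ZMod 4) : r.frame i 1 0 = r.v (i + 1) := by simp [frame, v_add_one]

lemma frame_one_one (i : ZMod 4) : r.frame i 1 1 = r.v (i + 2) := by simp [frame, v_add_two]

lemma frame_zero_one (i : ZMod 4) : r.frame i 0 1 = r.v (i + 3) := by simp [frame, v_add_three]

lemma frame_mem_region (i : ZMod 4) {a b : ℝ} (ha : a ∈ Icc (0 : ℝ) 1) (hb : b ∈ Icc (0 : ℝ) 1) :
    r.frame i a b ∈ r.region := by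
  have hv : ∀ j, r.v j ∈ r.region := fun j => subset_convexHull ℝ _ ⟨j, rfl⟩
  have hseg : ∀ {a b a' b' : ℝ}, r.frame i a b ∈ r.region → r.frame i a' b' ∈ r.region →
      ∀ s ∈ Icc (0 : ℝ) 1, r.frame i ((1 - s) * a + s * a') ((1 - s) * b + s * b') ∈ r.region :=
    fun h h' s hs => r.smul_add_smul_frame (t := 1 - s) (u := s) (by ring) i .. ▸
      convex_convexHull ℝ _ h h' (by linarith [hs.2]) hs.1 (by ring)
  have h0 := hseg (r.frame_zero_zero i ▸ hv i) (r.frame_one_zero i ▸ hv (i + 1)) a ha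
  have h1 := hseg (r.frame_zero_one i ▸ hv (i + 3)) (r.frame_one_one i ▸ hv (i + 2)) a ha
  convert hseg (by simpa using h0) (by simpa using h1) b hb using 2 <;> ring

lemma mem_region_iff (i : ZMod 4) (x : ℂ) :
    x ∈ r.region ↔ r.coordA i x ∈ Icc (0 : ℝ) 1 ∧ r.coordB i x ∈ Icc (0 : ℝ) 1 := by
  refine ⟨fun hx => ?_, fun h => r.frame_coords i x ▸ r.frame_mem_region i h.1 h.2⟩
  suffices r.region ⊆ {x | r.coordA i x ∈ Icc (0 : ℝ) 1 ∧ r.coordB i x ∈ Icc (0 : ℝ) 1} from this hx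
  refine convexHull_min ?_ ?_
  · rintro _ ⟨j, rfl⟩
    obtain ⟨m, rfl⟩ : ∃ m, j = i + m := ⟨j - i, by ring⟩
    rcases ZMod.cases_four m with rfl | rfl | rfl | rfl
    · rw [add_zero, ← frame_zero_zero]
      simp [coordA_frame, coordB_frame]
    · rw [← frame_one_zero]
      simp [coordA_frame, coordB_frame]
    · rw [← frame_one_one]
      simp [coordA_frame, coordB_frame]
    · rw [← frame_zero_one]
      simp [coordA_frame, coordB_frame]
  · intro x hx y hy s u hs hu hsu
    rw [← r.frame_coords i x, ← r.frame_coords i y, smul_add_smul_frame _ hsu]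
    simp only [Set.mem_ofPred_eq, coordA_frame, coordB_frame] at hx hy ⊢
    exact ⟨convex_Icc (0 : ℝ) 1 hx.1 hy.1 hs hu hsu, convex_Icc (0 : ℝ) 1 hx.2 hy.2 hs hu hsu⟩

lemma continuous_coordA (i : ZMod 4) : Continuous (r.coordA i) := by
  unfold coordA coordB; fun_prop

lemma continuous_coordB (i : ZMod 4) : Continuous (r.coordB i) := by
  unfold coordB; fun_prop

lemma frame_mem_interior (i : ZMod 4) {a b : ℝ} (ha : a ∈ Ioo (0 : ℝ) 1)
    (hb : b ∈ Ioo (0 : ℝ) 1) : r.frame i a b ∈ interior r.region := by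
  refine interior_maximal (t := {x | r.coordA i x ∈ Ioo 0 1 ∧ r.coordB i x ∈ Ioo 0 1})
    (fun x hx => (r.mem_region_iff i x).2 ⟨Ioo_subset_Icc_self hx.1, Ioo_subset_Icc_self hx.2⟩)
    ((isOpen_Ioo.preimage (r.continuous_coordA i)).inter
      (isOpen_Ioo.preimage (r.continuous_coordB i))) ?_
  simpa [coordA_frame, coordB_frame] using ⟨ha, hb⟩

lemma frame_zero_notMem_interior (i : ZMod 4) (a : ℝ) : r.frame i a 0 ∉ interior r.region := by
  intro h
  have hopen : IsOpen ((r.frame i a) ⁻¹' interior r.region) :=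
    isOpen_interior.preimage (by unfold frame; fun_prop)
  obtain ⟨ε, hε, hball⟩ := Metric.isOpen_iff.1 hopen 0 h
  have hneg : -(ε / 2) ∈ Metric.ball (0 : ℝ) ε := by
    rw [Metric.mem_ball, dist_zero_right, norm_neg, Real.norm_eq_abs, abs_of_pos (by positivity)]
    linarith
  have := ((r.mem_region_iff i _).1 (interior_subset (hball hneg))).2.1
  rw [coordB_frame] at this
  linarith

lemma sideMid_eq_frame (i : ZMod 4) : r.sideMid i = r.frame i (1 / 2) 0 := by
  simp only [sideMid, frame, v_add_one, Complex.real_smul]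
  push_cast
  ring

lemma eventually_sideMid_add_smul_mem_region (i : ZMod 4) :
    ∀ᶠ s in 𝓝 (0 : ℝ), r.sideMid i + s • r.edge i ∈ r.region := by
  filter_upwards [Ioo_mem_nhds (show (-1 / 2 : ℝ) < 0 by norm_num)
    (show (0 : ℝ) < 1 / 2 by norm_num)] with s hs
  convert r.frame_mem_region i (a := 1 / 2 + s) ⟨by linarith [hs.1], by linarith [hs.2]⟩
    ⟨le_rfl, zero_le_one⟩ using 1
  simp only [Rhombus.sideMid_eq_frame, Rhombus.frame, zero_smul, add_zero, add_smul]
  ring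

lemma center_eq_frame : r.center = r.frame 0 (1 / 2) (1 / 2) := by
  simp only [center, frame, Complex.real_smul]
  rw [show (2 : ZMod 4) = 0 + 2 by rfl, v_add_two]
  push_cast
  ring

lemma region_subset_closure_interior : r.region ⊆ closure (interior r.region) := by
  have hconv : Convex ℝ r.region := convex_convexHull ℝ _
  rw [hconv.closure_interior_eq_closure_of_nonempty_interior
    ⟨_, r.center_eq_frame ▸ r.frame_mem_interior 0 (by norm_num) (by norm_num)⟩]
  exact subset_closure

lemma eventually_mem_interior_of_coordB_pos (i : ZMod 4) :
    ∀ᶠ x in 𝓝 (r.sideMid i), 0 < r.coordB i x → x ∈ interior r.region := by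
  have hopen : IsOpen {x | r.coordA i x ∈ Ioo 0 1 ∧ r.coordB i x ∈ Ioo (-1) 1} :=
    (isOpen_Ioo.preimage (r.continuous_coordA i)).inter
      (isOpen_Ioo.preimage (r.continuous_coordB i))
  have hmid : r.sideMid i ∈ {x | r.coordA i x ∈ Ioo 0 1 ∧ r.coordB i x ∈ Ioo (-1) 1} := by
    rw [sideMid_eq_frame]
    norm_num [coordA_frame, coordB_frame]
  filter_upwards [hopen.mem_nhds hmid] with x hx hpos
  rw [← r.frame_coords i x]
  exact r.frame_mem_interior i hx.1 ⟨hpos, hx.2.2⟩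

lemma v_mem_region (j : ZMod 4) : r.v j ∈ r.region := subset_convexHull ℝ _ ⟨j, rfl⟩

lemma sideEnds_subset_region (j : ZMod 4) : r.sideEnds j ⊆ r.region := by
  rintro x (rfl | rfl)
  exacts [r.v_mem_region j, r.v_mem_region (j + 1)]

lemma coordB_v_add_two (i : ZMod 4) : r.coordB i (r.v (i + 2)) = 1 := by
  rw [← frame_one_one, coordB_frame]

lemma coordB_v_add_three (i : ZMod 4) : r.coordB i (r.v (i + 3)) = 1 := by
  rw [← frame_zero_one, coordB_frame]

lemma coordB_eq_zero_of_mem_sideEnds {i : ZMod 4} {x : ℂ} (hx : x ∈ r.sideEnds i) :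
    r.coordB i x = 0 := by
  rcases hx with rfl | rfl
  · rw [← frame_zero_zero, coordB_frame]
  · rw [← frame_one_zero, coordB_frame]

lemma coordB_sideMid (i : ZMod 4) : r.coordB i (r.sideMid i) = 0 := by
  rw [sideMid_eq_frame, coordB_frame]

lemma eq_of_coordB_eq_zero {i j : ZMod 4} (h : ∀ x ∈ r.sideEnds j, r.coordB i x = 0) : j = i := by
  obtain ⟨m, rfl⟩ : ∃ m, j = i + m := ⟨j - i, by ring⟩
  have h0 := h _ (Or.inl rfl)
  have h1 := h _ (Or.inr rfl)
  rcases ZMod.cases_four m with rfl | rfl | rfl | rfl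
  · exact add_zero i
  · rw [show i + 1 + 1 = i + 2 by ring, coordB_v_add_two] at h1
    norm_num at h1
  · rw [coordB_v_add_two] at h0
    norm_num at h0
  · rw [coordB_v_add_three] at h0
    norm_num at h0

lemma sideEnds_injective : Function.Injective r.sideEnds := fun _ _ h =>
  (r.eq_of_coordB_eq_zero fun _ hx => r.coordB_eq_zero_of_mem_sideEnds (h ▸ hx)).symm

/-- `(x / e).im` is the height of `x` across the direction `e`; when `e` is parallel to the side
`i`, the coordinate `coordB i` measures the height above that side. -/
lemma coordB_mul_im_div {e : ℂ} {i : ZMod 4} (hpar : (r.edge i / e).im = 0) (x : ℂ) :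
    r.coordB i x * (r.edge (i + 1) / e).im = (x / e).im - (r.v i / e).im := by
  conv_rhs => rw [← r.frame_coords i x]
  simp only [frame, add_div, Complex.add_im, Complex.real_smul, mul_div_assoc,
    Complex.im_ofReal_mul, hpar]
  ring

lemma im_edge_add_one_div_ne_zero {e : ℂ} (he : e ≠ 0) {i : ZMod 4}
    (hpar : (r.edge i / e).im = 0) : (r.edge (i + 1) / e).im ≠ 0 := by
  intro h
  have := r.coordB_mul_im_div hpar (r.v i + I * e)
  rw [h, mul_zero, add_div, mul_div_cancel_right₀ _ he, Complex.add_im, Complex.I_im] at this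
  linarith

lemma im_sideMid_div {e : ℂ} {i : ZMod 4} (hpar : (r.edge i / e).im = 0) :
    (r.sideMid i / e).im = (r.v i / e).im := by
  linear_combination -(r.coordB_mul_im_div hpar (r.sideMid i)) +
    (r.edge (i + 1) / e).im * r.coordB_sideMid i

lemma eventually_mem_interior {e : ℂ} {i : ZMod 4} (hpar : (r.edge i / e).im = 0) :
    ∀ᶠ x in 𝓝 (r.sideMid i),
      0 < (r.edge (i + 1) / e).im * ((x / e).im - (r.sideMid i / e).im) →
        x ∈ interior r.region := by
  filter_upwards [r.eventually_mem_interior_of_coordB_pos i] with x hx hpos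
  rw [r.im_sideMid_div hpar, ← r.coordB_mul_im_div hpar] at hpos
  exact hx (pos_of_mul_pos_right (by nlinarith) (sq_nonneg (r.edge (i + 1) / e).im))

end Rhombus

lemma edge_eq_or_eq_neg_of_sideEnds_eq {r r' : Rhombus} {i i' : ZMod 4}
    (h : r.sideEnds i = r'.sideEnds i') : r'.edge i' = r.edge i ∨ r'.edge i' = -r.edge i := by
  rcases Set.pair_eq_pair_iff.1 h.symm with ⟨h1, h2⟩ | ⟨h1, h2⟩
  · left; rw [Rhombus.edge, Rhombus.edge, h1, h2]
  · right; rw [Rhombus.edge, Rhombus.edge, h1, h2, neg_sub]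

lemma sideMid_eq_of_sideEnds_eq {r r' : Rhombus} {i i' : ZMod 4}
    (h : r.sideEnds i = r'.sideEnds i') : r'.sideMid i' = r.sideMid i := by
  rcases Set.pair_eq_pair_iff.1 h.symm with ⟨h1, h2⟩ | ⟨h1, h2⟩ <;>
    simp only [Rhombus.sideMid, h1, h2, add_comm]

lemma im_edge_div_eq_zero_of_sideEnds_eq {r r' : Rhombus} {i i' : ZMod 4}
    (h : r.sideEnds i = r'.sideEnds i') {e : ℂ} (hpar : (r.edge i / e).im = 0) :
    (r'.edge i' / e).im = 0 := by
  rcases edge_eq_or_eq_neg_of_sideEnds_eq h with h' | h' <;> simp [h', neg_div, hpar]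

/-! ### Rhombus tilings -/

namespace RhombusTiling

variable {T : RhombusTiling}

lemma eq_of_mem_region_of_mem_interior {r r' : Rhombus} (hr : r ∈ T.rhombi)
    (hr' : r' ∈ T.rhombi) {z : ℂ} (hz : z ∈ r.region) (hz' : z ∈ interior r'.region) :
    r = r' := by
  by_contra hne
  obtain ⟨u, hu', hu⟩ :=
    mem_closure_iff.1 (r.region_subset_closure_interior hz) _ isOpen_interior hz'
  exact Set.eq_empty_iff_forall_notMem.1 (T.int_disjoint r hr r' hr' hne) u ⟨hu, hu'⟩

/-- Two distinct rhombi of the tiling sharing a side lie on opposite sides of it. -/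
lemma mul_im_edge_add_one_div_neg {r r' : Rhombus} (hr : r ∈ T.rhombi) (hr' : r' ∈ T.rhombi)
    (hne : r ≠ r') {i i' : ZMod 4} (h : r.sideEnds i = r'.sideEnds i') {e : ℂ} (he : e ≠ 0)
    (hpar : (r.edge i / e).im = 0) :
    (r.edge (i + 1) / e).im * (r'.edge (i' + 1) / e).im < 0 := by
  set σ := (r.edge (i + 1) / e).im
  set σ' := (r'.edge (i' + 1) / e).im
  have hpar' := im_edge_div_eq_zero_of_sideEnds_eq h hpar
  have hσ := r.im_edge_add_one_div_ne_zero he hpar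
  have hσ' := r'.im_edge_add_one_div_ne_zero he hpar'
  by_contra! hpos
  replace hpos : 0 < σ * σ' := lt_of_le_of_ne hpos (mul_ne_zero hσ hσ').symm
  set m := r.sideMid i
  have hγ : Tendsto (fun s : ℝ => m + (σ * s) • (I * e)) (𝓝[>] 0) (𝓝 m) := by
    have : Continuous fun s : ℝ => m + (σ * s) • (I * e) := by fun_prop
    simpa using (this.tendsto 0).mono_left nhdsWithin_le_nhds
  have hheight : ∀ s : ℝ, ((m + (σ * s) • (I * e)) / e).im - (m / e).im = σ * s := fun s => by
    rw [add_div, Complex.real_smul, mul_div_assoc, mul_div_cancel_right₀ _ he]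
    simp
  obtain ⟨s, hs, hs', hs0⟩ := ((hγ.eventually (r.eventually_mem_interior hpar)).and
    ((hγ.eventually ((sideMid_eq_of_sideEnds_eq h) ▸ r'.eventually_mem_interior hpar')).and
      self_mem_nhdsWithin)).exists
  rw [hheight] at hs
  rw [show r.sideMid i = m from rfl, hheight] at hs'
  have hs0 : (0 : ℝ) < s := hs0
  exact Set.eq_empty_iff_forall_notMem.1 (T.int_disjoint r hr r' hr' hne) _
    ⟨hs (by nlinarith [mul_pos hs0 (mul_self_pos.2 hσ)]), hs' (by nlinarith)⟩

lemma coordB_eq_zero_of_mem_region_inter {r r' : Rhombus} (hr : r ∈ T.rhombi)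
    (hr' : r' ∈ T.rhombi) (hne : r ≠ r') {i i' : ZMod 4} (h : r.sideEnds i = r'.sideEnds i')
    {x : ℂ} (hx : x ∈ r.region) (hx' : x ∈ r'.region) : r.coordB i x = 0 := by
  have he := r.edge_ne_zero i
  have hpar : (r.edge i / r.edge i).im = 0 := by simp [div_self he]
  have hpar' := im_edge_div_eq_zero_of_sideEnds_eq h hpar
  have hv : r.coordB i (r'.v i') = 0 := r.coordB_eq_zero_of_mem_sideEnds (h ▸ Or.inl rfl)
  have hB := r.coordB_mul_im_div hpar x
  have hB' := r'.coordB_mul_im_div hpar' x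
  have hlev := r.coordB_mul_im_div hpar (r'.v i')
  rw [hv, zero_mul] at hlev
  have hsep := mul_im_edge_add_one_div_neg hr hr' hne h he hpar
  have h0 := ((r.mem_region_iff i x).1 hx).2.1
  have h0' := ((r'.mem_region_iff i' x).1 hx').2.1
  have : r.coordB i x * (r.edge (i + 1) / r.edge i).im = 0 := by
    nlinarith [mul_nonneg h0 h0']
  exact (mul_eq_zero.1 this).resolve_right (r.im_edge_add_one_div_ne_zero he hpar)

lemma index_eq_of_adjSide {r r' : Rhombus} (hr : r ∈ T.rhombi) (hr' : r' ∈ T.rhombi)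
    {i j : ZMod 4} (hi : AdjSide r r' i) (hj : AdjSide r r' j) : j = i := by
  obtain ⟨hne, i', hi'⟩ := hi
  obtain ⟨-, j', hj'⟩ := hj
  exact r.eq_of_coordB_eq_zero fun x hx => coordB_eq_zero_of_mem_region_inter hr hr' hne hi'
    (r.sideEnds_subset_region j hx) (r'.sideEnds_subset_region j' (hj' ▸ hx))

lemma eq_of_adjSide_of_adjSide {r r₁ r₂ : Rhombus} (hr : r ∈ T.rhombi) (hr₁ : r₁ ∈ T.rhombi)
    (hr₂ : r₂ ∈ T.rhombi) {i : ZMod 4} (h₁ : AdjSide r r₁ i) (h₂ : AdjSide r r₂ i) : r₁ = r₂ := by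
  by_contra hne
  obtain ⟨hne₁, i₁, e₁⟩ := h₁
  obtain ⟨hne₂, i₂, e₂⟩ := h₂
  have he := r.edge_ne_zero i
  have hpar : (r.edge i / r.edge i).im = 0 := by simp [div_self he]
  have s₁ := mul_im_edge_add_one_div_neg hr hr₁ hne₁ e₁ he hpar
  have s₂ := mul_im_edge_add_one_div_neg hr hr₂ hne₂ e₂ he hpar
  have s₁₂ := mul_im_edge_add_one_div_neg hr₁ hr₂ hne (e₁.symm.trans e₂) he
    (im_edge_div_eq_zero_of_sideEnds_eq e₁ hpar)
  nlinarith [mul_pos_of_neg_of_neg s₁ s₂, sq_nonneg (r.edge (i + 1) / r.edge i).im]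

/-- A rhombus of the tiling containing a segment that crosses a side of `r` through its midpoint
is `r` itself. -/
lemma eq_of_eventually_mem_region {r R : Rhombus} (hr : r ∈ T.rhombi) (hR : R ∈ T.rhombi)
    {i : ZMod 4} {e : ℂ} (he : e ≠ 0) (hpar : (r.edge i / e).im = 0) {w : ℂ}
    (hw : (w / e).im ≠ 0) (hseg : ∀ᶠ t in 𝓝 (0 : ℝ), r.sideMid i + t • w ∈ R.region) :
    R = r := by
  set σ := (r.edge (i + 1) / e).im
  set κ := (w / e).im
  have hσ := r.im_edge_add_one_div_ne_zero he hpar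
  have hlin : Tendsto (fun s : ℝ => σ * κ * s) (𝓝[>] 0) (𝓝 0) := by
    have : Continuous fun s : ℝ => σ * κ * s := by fun_prop
    simpa using (this.tendsto 0).mono_left nhdsWithin_le_nhds
  have hγ : Tendsto (fun s : ℝ => r.sideMid i + (σ * κ * s) • w) (𝓝[>] 0)
      (𝓝 (r.sideMid i)) := by
    have : Continuous fun s : ℝ => r.sideMid i + (σ * κ * s) • w := by fun_prop
    simpa using (this.tendsto 0).mono_left nhdsWithin_le_nhds
  obtain ⟨s, hs, hsR, hs0⟩ := ((hγ.eventually (r.eventually_mem_interior hpar)).and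
    ((hlin.eventually hseg).and self_mem_nhdsWithin)).exists
  have hs0 : (0 : ℝ) < s := hs0
  refine eq_of_mem_region_of_mem_interior hR hr hsR (hs ?_)
  rw [add_div, Complex.add_im, Complex.real_smul, mul_div_assoc, Complex.im_ofReal_mul]
  have : 0 < σ * κ * (σ * κ) * s := mul_pos (mul_self_pos.2 (mul_ne_zero hσ hw)) hs0
  linarith

lemma exists_pos_le_abs_im (T : RhombusTiling) :
    ∃ c > 0, ∀ r ∈ T.rhombi, c ≤ |(r.edge 1 / r.edge 0).im| := by
  -- the absolute sine of the angle of a rhombus of side `2` with diagonal `d`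
  set f : ℝ → ℝ := fun d => √(1 - (d ^ 2 / 8 - 1) ^ 2)
  have hf : ∀ r ∈ T.rhombi, |(r.edge 1 / r.edge 0).im| = f (dist (r.v 0) (r.v 2)) := by
    intro r hr
    rw [← Real.sqrt_sq_eq_abs, r.im_edge_one_div_edge_zero_sq, T.side_two r hr]
    norm_num
    rfl
  obtain ⟨r₀, hr₀, -⟩ := T.covers 0
  obtain ⟨_, ⟨r, hr, rfl⟩, hmin⟩ :=
    Set.exists_min_image _ f T.finite_angles ⟨_, r₀, hr₀, rfl⟩
  refine ⟨f (dist (r.v 0) (r.v 2)), ?_, fun r' hr' => ?_⟩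
  · rw [← hf r hr]
    exact abs_pos.2 (by simpa using r.im_edge_add_one_div_edge_ne_zero 0)
  · rw [hf r' hr']
    exact hmin _ ⟨r', hr', rfl⟩

end RhombusTiling

/-! ### Train-tracks -/

namespace TrainTrack

variable {T : RhombusTiling} (t t' : TrainTrack T)

/-- The side of `t.seq n` shared with `t.seq (n - 1)`. -/
def entry (n : ℤ) : ZMod 4 := (t.straight n).choose

lemma adjSide_prev (n : ℤ) : AdjSide (t.seq n) (t.seq (n - 1)) (t.entry n) :=
  (t.straight n).choose_spec.1

lemma adjSide_next (n : ℤ) : AdjSide (t.seq n) (t.seq (n + 1)) (t.entry n + 2) :=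
  (t.straight n).choose_spec.2

lemma sideEnds_entry_succ (n : ℤ) :
    (t.seq (n + 1)).sideEnds (t.entry (n + 1)) = (t.seq n).sideEnds (t.entry n + 2) := by
  obtain ⟨hne, k, hk⟩ := t.adjSide_next n
  have hprev := t.adjSide_prev (n + 1)
  rw [add_sub_cancel_right] at hprev
  rw [RhombusTiling.index_eq_of_adjSide (t.mem _) (t.mem _) hprev ⟨hne.symm, _, hk.symm⟩] at hk
  exact hk.symm

def transversal (n : ℤ) : ℂ := (t.seq n).edge (t.entry n)

def step (n : ℤ) : ℂ := (t.seq n).edge (t.entry n + 1)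

def entryMid (n : ℤ) : ℂ := (t.seq n).sideMid (t.entry n)

def direction : ℂ := t.transversal 0

lemma entryMid_succ (n : ℤ) : t.entryMid (n + 1) = t.entryMid n + t.step n := by
  rw [entryMid, ← sideMid_eq_of_sideEnds_eq (t.sideEnds_entry_succ n), Rhombus.sideMid_add_two]
  rfl

lemma center_seq (n : ℤ) : (t.seq n).center = t.entryMid n + (1 / 2 : ℝ) • t.step n := by
  rw [(t.seq n).center_eq_sideMid_add (t.entry n), Complex.real_smul, entryMid, step]
  push_cast
  ring

lemma transversal_eq (n : ℤ) : t.transversal n = t.direction ∨ t.transversal n = -t.direction := by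
  have hsucc : ∀ n, t.transversal (n + 1) = -t.transversal n ∨
      t.transversal (n + 1) = t.transversal n := fun n => by
    rcases edge_eq_or_eq_neg_of_sideEnds_eq (t.sideEnds_entry_succ n).symm with h | h <;>
      simp only [transversal, h, Rhombus.edge_add_two, neg_neg, true_or, or_true]
  induction n using Int.induction_on with
  | zero => exact Or.inl rfl
  | succ k ih => rcases hsucc k with h | h <;> rcases ih with h' | h' <;> simp [h, h']
  | pred k ih =>
    have := hsucc (-k - 1)
    rw [sub_add_cancel] at this
    have h' : t.transversal (-k - 1) = t.transversal (-k) ∨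
        t.transversal (-k - 1) = -t.transversal (-k) := by
      rcases this with h | h <;> [right; left] <;> simp [h]
    rcases h' with h | h <;> rcases ih with h' | h' <;> simp [h, h']

lemma direction_ne_zero : t.direction ≠ 0 := (t.seq 0).edge_ne_zero _

lemma im_transversal_div_direction (n : ℤ) : (t.transversal n / t.direction).im = 0 := by
  rcases t.transversal_eq n with h | h <;> simp [h, neg_div, div_self t.direction_ne_zero]

lemma mul_im_step_div_direction_pos (n : ℤ) :
    0 < (t.step n / t.direction).im * (t.step (n + 1) / t.direction).im := by
  have hpar : ((t.seq n).edge (t.entry n + 2) / t.direction).im = 0 := by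
    rw [Rhombus.edge_add_two, neg_div, Complex.neg_im, ← transversal,
      im_transversal_div_direction, neg_zero]
  have := RhombusTiling.mul_im_edge_add_one_div_neg (t.mem n) (t.mem (n + 1))
    (t.adjSide_next n).1 (t.sideEnds_entry_succ n).symm t.direction_ne_zero hpar
  rw [show t.entry n + 2 + 1 = t.entry n + 1 + 2 by ring, Rhombus.edge_add_two, neg_div,
    Complex.neg_im, neg_mul] at this
  exact neg_neg_iff_pos.1 this

/-- The height across the track, scaled by `(t.step 0 / t.direction).im` so that the track
climbs. -/
def height : ℂ →ₗ[ℝ] ℝ where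
  toFun x := (t.step 0 / t.direction).im * (x / t.direction).im
  map_add' x y := by simp only [add_div, Complex.add_im]; ring
  map_smul' c x := by
    simp only [Complex.real_smul, mul_div_assoc, Complex.im_ofReal_mul, RingHom.id_apply,
      smul_eq_mul]
    ring

lemma height_apply (x : ℂ) : t.height x = (t.step 0 / t.direction).im * (x / t.direction).im :=
  rfl

lemma height_step_pos (n : ℤ) : 0 < t.height (t.step n) :=
  pos_mul_of_pos_mul_succ t.mul_im_step_div_direction_pos n

lemma strictMono_height_center : StrictMono fun n => t.height (t.seq n).center := by
  refine strictMono_int_of_lt_succ fun n => ?_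
  simp only [center_seq, entryMid_succ, map_add, map_smul, smul_eq_mul]
  linarith [t.height_step_pos n, t.height_step_pos (n + 1)]

theorem injective_seq : Function.Injective t.seq := fun _ _ h =>
  t.strictMono_height_center.injective (congrArg (fun r => t.height r.center) h)

lemma exists_adjSide (n : ℤ) {ε : ℤ} (hε : ε = 1 ∨ ε = -1) :
    ∃ k, AdjSide (t.seq n) (t.seq (n - ε)) k ∧ AdjSide (t.seq n) (t.seq (n + ε)) (k + 2) := by
  rcases hε with rfl | rfl
  · exact ⟨_, t.adjSide_prev n, t.adjSide_next n⟩
  · refine ⟨t.entry n + 2, ?_, ?_⟩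
    · rw [sub_neg_eq_add]
      exact t.adjSide_next n
    · rw [add_assoc, show (2 : ZMod 4) + 2 = 0 from rfl, add_zero, ← sub_eq_add_neg]
      exact t.adjSide_prev n

variable {t t'} in
lemma seq_add_eq_of_seq_sub_eq {n n' ε ε' : ℤ} (hε : ε = 1 ∨ ε = -1) (hε' : ε' = 1 ∨ ε' = -1)
    (h₀ : t.seq n = t'.seq n') (h₁ : t.seq (n - ε) = t'.seq (n' - ε')) :
    t.seq (n + ε) = t'.seq (n' + ε') := by
  obtain ⟨k, hk, hk'⟩ := t.exists_adjSide n hε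
  obtain ⟨l, hl, hl'⟩ := t'.exists_adjSide n' hε'
  rw [← h₀, ← h₁] at hl
  rw [← h₀, RhombusTiling.index_eq_of_adjSide (t.mem n) (t.mem _) hk hl] at hl'
  exact RhombusTiling.eq_of_adjSide_of_adjSide (t.mem n) (t.mem _) (t'.mem _) hk' hl'

variable {t t'} in
lemma seq_add_eq_seq_add_mul {a b ε : ℤ} (hε : ε = 1 ∨ ε = -1) (h₀ : t.seq a = t'.seq b)
    (h₁ : t.seq (a + 1) = t'.seq (b + ε)) (k : ℤ) : t.seq (a + k) = t'.seq (b + ε * k) := by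
  suffices ∀ k : ℤ, t.seq (a + k) = t'.seq (b + ε * k) ∧
      t.seq (a + k + 1) = t'.seq (b + ε * k + ε) from (this k).1
  intro k
  induction k using Int.induction_on with
  | zero => simpa using ⟨h₀, h₁⟩
  | succ k ih =>
    refine ⟨by convert ih.2 using 2 <;> ring, ?_⟩
    convert seq_add_eq_of_seq_sub_eq (Or.inl rfl) hε ih.2 (by convert ih.1 using 2 <;> ring)
      using 2 <;> ring
  | pred k ih =>
    refine ⟨?_, by convert ih.1 using 2 <;> ring⟩
    convert seq_add_eq_of_seq_sub_eq (Or.inr rfl) (by omega : -ε = 1 ∨ -ε = -1) ih.1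
      (by convert ih.2 using 2 <;> ring) using 2 <;> ring

variable {t t'} in
lemma range_seq_eq {a b ε : ℤ} (hε : ε = 1 ∨ ε = -1) (h₀ : t.seq a = t'.seq b)
    (h₁ : t.seq (a + 1) = t'.seq (b + ε)) : range t.seq = range t'.seq := by
  have key := seq_add_eq_seq_add_mul hε h₀ h₁
  have hε2 : ε * ε = 1 := by rcases hε with rfl | rfl <;> norm_num
  ext x
  constructor
  · rintro ⟨m, rfl⟩
    exact ⟨b + ε * (m - a), by rw [← key]; congr 1; ring⟩
  · rintro ⟨m, rfl⟩
    exact ⟨a + ε * (m - b), by rw [key]; congr 1; linear_combination (m - b) * hε2⟩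

variable {t t'} in
lemma range_seq_eq_of_entry {a b : ℤ} (h : t.seq a = t'.seq b)
    (hab : t'.entry b = t.entry a ∨ t'.entry b = t.entry a + 2) : range t.seq = range t'.seq := by
  have hnext := t.adjSide_next a
  rw [h] at hnext
  rcases hab with hab | hab
  · have h' := t'.adjSide_next b
    rw [hab] at h'
    exact range_seq_eq (Or.inl rfl) h
      (RhombusTiling.eq_of_adjSide_of_adjSide (t'.mem b) (t.mem _) (t'.mem _) hnext h')
  · have h' := t'.adjSide_prev b
    rw [hab] at h'
    refine range_seq_eq (Or.inr rfl) h ?_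
    rw [← sub_eq_add_neg]
    exact RhombusTiling.eq_of_adjSide_of_adjSide (t'.mem b) (t.mem _) (t'.mem _) hnext h'

variable {t t'} in
/-- Distinct train-tracks cross transversally at a common rhombus. -/
lemma entry_eq_add_one_or_add_three (hne : range t.seq ≠ range t'.seq) {a b : ℤ}
    (h : t.seq a = t'.seq b) : t'.entry b = t.entry a + 1 ∨ t'.entry b = t.entry a + 3 := by
  obtain ⟨m, hm⟩ : ∃ m, t'.entry b = t.entry a + m := ⟨_, (add_sub_cancel _ _).symm⟩
  rcases ZMod.cases_four m with rfl | rfl | rfl | rfl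
  · exact absurd (range_seq_eq_of_entry h (Or.inl (hm.trans (add_zero _)))) hne
  · exact Or.inl hm
  · exact absurd (range_seq_eq_of_entry h (Or.inr hm)) hne
  · exact Or.inr hm

end TrainTrack

/-! ### Paths of train-tracks -/

namespace TrainTrack

variable {T : RhombusTiling} (t : TrainTrack T)

lemma im_step_div_direction_ne_zero (n : ℤ) : (t.step n / t.direction).im ≠ 0 :=
  (t.seq n).im_edge_add_one_div_ne_zero t.direction_ne_zero (t.im_transversal_div_direction n)

lemma abs_im_step_div_direction (n : ℤ) :
    |(t.step n / t.direction).im| = |((t.seq n).edge 1 / (t.seq n).edge 0).im| := by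
  rw [← (t.seq n).im_edge_add_one_div_edge (t.entry n)]
  rcases t.transversal_eq n with h | h
  · rw [← h]
    rfl
  · rw [show t.direction = -t.transversal n by rw [h, neg_neg], div_neg, neg_im, abs_neg]
    rfl

lemma height_direction : t.height t.direction = 0 := by
  simp [height_apply, div_self t.direction_ne_zero]

lemma eq_of_height_eq_of_re_eq {x y : ℂ} (hh : t.height x = t.height y)
    (hre : (x / t.direction).re = (y / t.direction).re) : x = y := by
  rw [height_apply, height_apply] at hh
  have him := mul_left_cancel₀ (t.im_step_div_direction_ne_zero 0) hh
  exact (div_left_inj' t.direction_ne_zero).1 (Complex.ext hre him)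

lemma exists_pos_le_height_step : ∃ c > 0, ∀ n, c ≤ t.height (t.step n) := by
  obtain ⟨c, hc, hle⟩ := T.exists_pos_le_abs_im
  have hσ := t.im_step_div_direction_ne_zero 0
  refine ⟨|(t.step 0 / t.direction).im| * c, mul_pos (abs_pos.2 hσ) hc, fun n => ?_⟩
  have h := t.height_step_pos n
  rw [height_apply] at h ⊢
  calc |(t.step 0 / t.direction).im| * c
      ≤ |(t.step 0 / t.direction).im| * |(t.step n / t.direction).im| := by
        rw [t.abs_im_step_div_direction n]
        exact mul_le_mul_of_nonneg_left (hle _ (t.mem n)) (abs_nonneg _)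
    _ = _ := by rw [← abs_mul, abs_of_pos h]

def path : ℝ → ℂ := piecewiseLinear t.entryMid t.step

lemma continuous_path : Continuous t.path := continuous_piecewiseLinear _ _ t.entryMid_succ

lemma strictMono_height_path : StrictMono (t.height ∘ t.path) := by
  rw [path, map_piecewiseLinear]
  exact strictMono_piecewiseLinear (fun n => by simp [entryMid_succ]) t.height_step_pos

lemma surjective_height_path : Function.Surjective (t.height ∘ t.path) := by
  obtain ⟨c, hc, hle⟩ := t.exists_pos_le_height_step
  rw [path, map_piecewiseLinear]
  exact surjective_piecewiseLinear (fun n => by simp [entryMid_succ]) hc hle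

lemma path_eq {n : ℤ} {τ : ℝ} (h₁ : n ≤ τ) (h₂ : τ < n + 1) :
    t.path τ = t.entryMid n + (τ - n) • t.step n :=
  piecewiseLinear_eq _ _ h₁ h₂

lemma path_add_half (n : ℤ) : t.path (n + 1 / 2) = (t.seq n).center := by
  rw [t.path_eq (n := n) (by linarith) (by linarith), center_seq, add_sub_cancel_left]

lemma path_eq_frame (τ : ℝ) :
    t.path τ = (t.seq ⌊τ⌋).frame (t.entry ⌊τ⌋) (1 / 2) (Int.fract τ) := by
  rw [path, piecewiseLinear, entryMid, Rhombus.sideMid_eq_frame, Rhombus.frame, Rhombus.frame, step,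
    zero_smul, add_zero]

lemma path_mem_interior {τ : ℝ} (h : Int.fract τ ≠ 0) :
    t.path τ ∈ interior (t.seq ⌊τ⌋).region := by
  rw [path_eq_frame]
  exact (t.seq _).frame_mem_interior _ (by norm_num)
    ⟨(Int.fract_nonneg τ).lt_of_ne' h, Int.fract_lt_one τ⟩

lemma entryMid_mem_region (n : ℤ) : t.entryMid n ∈ (t.seq n).region := by
  rw [entryMid, Rhombus.sideMid_eq_frame]
  exact Rhombus.frame_mem_region _ _ (by norm_num) (by norm_num)

lemma entryMid_notMem_interior {R : Rhombus} (hR : R ∈ T.rhombi) (n : ℤ) :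
    t.entryMid n ∉ interior R.region := by
  intro h
  obtain rfl := RhombusTiling.eq_of_mem_region_of_mem_interior (t.mem n) hR
    (t.entryMid_mem_region n) h
  rw [entryMid, Rhombus.sideMid_eq_frame] at h
  exact (t.seq n).frame_zero_notMem_interior _ _ h

def heightPathIso : ℝ ≃o ℝ :=
  t.strictMono_height_path.orderIsoOfSurjective _ t.surjective_height_path

/-- The path of `t` is the graph of `t.graph` over the height. -/
def graph (y : ℝ) : ℝ := (t.path (t.heightPathIso.symm y) / t.direction).re

lemma continuous_graph : Continuous t.graph :=
  Complex.continuous_re.comp ((t.continuous_path.comp t.heightPathIso.symm.continuous).div_const _)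

lemma graph_height_path (υ : ℝ) : t.graph (t.height (t.path υ)) = (t.path υ / t.direction).re := by
  rw [graph, show t.height (t.path υ) = t.heightPathIso υ from rfl, OrderIso.symm_apply_apply]

lemma height_path_heightPathIso_symm (y : ℝ) : t.height (t.path (t.heightPathIso.symm y)) = y :=
  t.heightPathIso.apply_symm_apply y

end TrainTrack

/-! ### Two crossing train-tracks -/

namespace TrainTrack

variable {T : RhombusTiling} (t t' : TrainTrack T)

lemma norm_transversal (n : ℤ) : ‖t.transversal n‖ = 2 := by
  rw [transversal, Rhombus.norm_edge, T.side_two _ (t.mem n)]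

variable {t t'} in
lemma step_eq_or_eq_neg_direction (hne : range t.seq ≠ range t'.seq) {a b : ℤ}
    (h : t.seq a = t'.seq b) : t.step a = t'.direction ∨ t.step a = -t'.direction := by
  have hstep : t.step a = t'.transversal b ∨ t.step a = -t'.transversal b := by
    rcases entry_eq_add_one_or_add_three hne h with hab | hab
    · left
      rw [step, transversal, hab, h]
    · right
      rw [transversal, hab, ← h, show t.entry a + 3 = t.entry a + 1 + 2 by ring,
        Rhombus.edge_add_two, neg_neg]
      rfl
  rcases hstep with h₁ | h₁ <;> rcases t'.transversal_eq b with h₂ | h₂ <;> simp [h₁, h₂]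

variable {t t'} in
lemma sideEnds_entry_ne (hne : range t.seq ≠ range t'.seq) (n n' : ℤ) :
    (t.seq n).sideEnds (t.entry n) ≠ (t'.seq n').sideEnds (t'.entry n') := by
  intro hE
  by_cases hrr : t.seq n = t'.seq n'
  · rw [hrr] at hE
    have := (t'.seq n').sideEnds_injective hE
    rcases entry_eq_add_one_or_add_three hne hrr with h | h <;> grind
  · have hprev := RhombusTiling.eq_of_adjSide_of_adjSide (t.mem n) (t.mem _) (t'.mem n')
      (t.adjSide_prev n) ⟨hrr, _, hE⟩
    have hE' := (t.sideEnds_entry_succ (n - 1)).symm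
    rw [sub_add_cancel, hE, ← hprev] at hE'
    have := (t.seq (n - 1)).sideEnds_injective hE'
    rcases entry_eq_add_one_or_add_three hne hprev with h | h <;> grind

variable {t t'} in
/-- Otherwise the rhombus of `t'` containing its transversal side would be both rhombi of `t`
adjacent along the transversal side of `t` with the same midpoint. -/
lemma im_transversal_div_direction_eq_zero_of_entryMid_eq {n n' : ℤ}
    (hz : t.entryMid n = t'.entryMid n') : (t'.transversal n' / t.direction).im = 0 := by
  by_contra hw
  have hseg : ∀ᶠ s in 𝓝 (0 : ℝ), t.entryMid n + s • t'.transversal n' ∈ (t'.seq n').region := by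
    rw [hz]
    exact (t'.seq n').eventually_sideMid_add_smul_mem_region _
  have hcur := RhombusTiling.eq_of_eventually_mem_region (t.mem n) (t'.mem n')
    t.direction_ne_zero (t.im_transversal_div_direction n) hw hseg
  have hmid := sideMid_eq_of_sideEnds_eq (t.sideEnds_entry_succ (n - 1))
  rw [sub_add_cancel] at hmid
  have hprev := RhombusTiling.eq_of_eventually_mem_region (t.mem (n - 1)) (t'.mem n')
    (i := t.entry (n - 1) + 2) t.direction_ne_zero (by
      rw [Rhombus.edge_add_two, neg_div, neg_im, ← transversal, im_transversal_div_direction,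
        neg_zero]) hw (by rw [hmid]; exact hseg)
  exact (t.adjSide_prev n).1 (hcur.symm.trans hprev)

variable {t t'} in
lemma entryMid_ne (hne : range t.seq ≠ range t'.seq) (n n' : ℤ) :
    t.entryMid n ≠ t'.entryMid n' := by
  intro hz
  have hpar : (t'.transversal n' / t.transversal n).im = 0 := by
    have := im_transversal_div_direction_eq_zero_of_entryMid_eq hz
    rcases t.transversal_eq n with h | h <;> simpa [h, div_neg] using this
  apply sideEnds_entry_ne hne n n'
  rw [Rhombus.sideEnds_eq, Rhombus.sideEnds_eq]
  change {t.entryMid n - t.transversal n / 2, t.entryMid n + t.transversal n / 2} =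
    ({t'.entryMid n' - t'.transversal n' / 2, t'.entryMid n' + t'.transversal n' / 2} : Set ℂ)
  rcases Complex.eq_or_eq_neg_of_im_div_eq_zero (a := t'.transversal n') (b := t.transversal n)
    (by rw [norm_transversal, norm_transversal]) ((t.seq n).edge_ne_zero _) hpar with h | h
  · rw [hz, h]
  · rw [hz, h, Set.pair_comm]
    ring_nf

lemma path_eq_center_add (τ : ℝ) :
    t.path τ = (t.seq ⌊τ⌋).center + (Int.fract τ - 1 / 2) • t.step ⌊τ⌋ := by
  rw [center_seq, path, piecewiseLinear, sub_smul]
  abel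

lemma path_of_fract_eq_zero {τ : ℝ} (h : Int.fract τ = 0) : t.path τ = t.entryMid ⌊τ⌋ := by
  rw [path, piecewiseLinear, h, zero_smul, add_zero]

variable {t t'} in
lemma fract_eq_half_of_path_eq (hne : range t.seq ≠ range t'.seq) {τ υ : ℝ}
    (hshared : t.seq ⌊τ⌋ = t'.seq ⌊υ⌋) (h : t.path τ = t'.path υ) : Int.fract τ = 1 / 2 := by
  rw [path_eq_center_add, path_eq_center_add, hshared, add_right_inj] at h
  have him := congrArg (fun z => (z / t.direction).im) h
  simp only [Complex.real_smul, mul_div_assoc, Complex.im_ofReal_mul] at him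
  rcases step_eq_or_eq_neg_direction hne.symm hshared.symm with h' | h' <;>
    simp only [h', neg_div, div_self t.direction_ne_zero, neg_im, one_im, neg_zero,
      mul_zero] at him <;>
    linarith [(mul_eq_zero.1 him).resolve_right (t.im_step_div_direction_ne_zero _)]

variable {t t'} in
lemma exists_seq_eq_of_path_eq (hne : range t.seq ≠ range t'.seq) {τ υ : ℝ}
    (h : t.path τ = t'.path υ) : ∃ n n', t.seq n = t'.seq n' ∧ τ = n + 1 / 2 := by
  by_cases hτ : Int.fract τ = 0
  · rw [t.path_of_fract_eq_zero hτ] at h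
    by_cases hυ : Int.fract υ = 0
    · exact absurd (t'.path_of_fract_eq_zero hυ ▸ h) (entryMid_ne hne _ _)
    · exact absurd (h ▸ t'.path_mem_interior hυ) (t.entryMid_notMem_interior (t'.mem _) _)
  · have hint := t.path_mem_interior hτ
    by_cases hυ : Int.fract υ = 0
    · rw [h, t'.path_of_fract_eq_zero hυ] at hint
      exact absurd hint (t'.entryMid_notMem_interior (t.mem _) _)
    · have hshared := RhombusTiling.eq_of_mem_region_of_mem_interior (t.mem _) (t'.mem _)
        (interior_subset hint) (h ▸ t'.path_mem_interior hυ)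
      refine ⟨⌊τ⌋, ⌊υ⌋, hshared, ?_⟩
      rw [← fract_eq_half_of_path_eq hne hshared h, Int.floor_add_fract]

/-- The offset of `t.path τ` from the path of `t'`, measured along `t'.direction`. -/
def offset (τ : ℝ) : ℝ := (t.path τ / t'.direction).re - t'.graph (t'.height (t.path τ))

lemma continuous_offset : Continuous (offset t t') :=
  (Complex.continuous_re.comp (t.continuous_path.div_const _)).sub
    (t'.continuous_graph.comp
      ((LinearMap.continuous_of_finiteDimensional _).comp t.continuous_path))

variable {t t'} in
lemma offset_add_half {n n' : ℤ} (h : t.seq n = t'.seq n') : offset t t' (n + 1 / 2) = 0 := by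
  rw [offset, path_add_half, h, ← path_add_half, graph_height_path, sub_self]

variable {t t'} in
lemma exists_seq_eq_of_offset_eq_zero (hne : range t.seq ≠ range t'.seq) {τ : ℝ}
    (h : offset t t' τ = 0) : ∃ n n', t.seq n = t'.seq n' ∧ τ = n + 1 / 2 := by
  set υ := t'.heightPathIso.symm (t'.height (t.path τ))
  refine exists_seq_eq_of_path_eq hne (υ := υ) (t'.eq_of_height_eq_of_re_eq ?_ ?_)
  · exact (t'.height_path_heightPathIso_symm _).symm
  · rw [← t'.graph_height_path υ, t'.height_path_heightPathIso_symm]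
    exact sub_eq_zero.1 h

variable {t t'} in
lemma height_step_eq_zero (hne : range t.seq ≠ range t'.seq) {n n' : ℤ}
    (h : t.seq n = t'.seq n') :
    t'.height (t.step n) = 0 := by
  rcases step_eq_or_eq_neg_direction hne h with h' | h' <;> simp [h', height_direction]

variable {t t'} in
lemma offset_eq (hne : range t.seq ≠ range t'.seq) {n n' : ℤ} (h : t.seq n = t'.seq n') {τ : ℝ}
    (h₁ : n ≤ τ) (h₂ : τ < n + 1) :
    offset t t' τ = (τ - (n + 1 / 2)) * (t.step n / t'.direction).re := by
  have hlin : ∀ σ : ℝ, n ≤ σ → σ < n + 1 → offset t t' σ = (t.entryMid n / t'.direction).re +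
      (σ - n) * (t.step n / t'.direction).re - t'.graph (t'.height (t.entryMid n)) := by
    intro σ h₁ h₂
    rw [offset, t.path_eq h₁ h₂, map_add, map_smul, height_step_eq_zero hne h, smul_zero,
      add_zero, add_div, add_re, Complex.real_smul, mul_div_assoc, re_ofReal_mul]
  have h₀ := offset_add_half h
  rw [hlin _ (by linarith) (by linarith)] at h₀
  rw [hlin τ h₁ h₂]
  linear_combination h₀

variable {t t'} in
lemma re_step_div_direction_mul_height_pos (hne : range t.seq ≠ range t'.seq) {n n' : ℤ}
    (h : t.seq n = t'.seq n') : 0 < (t.step n / t'.direction).re * t.height t'.direction := by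
  have := t.height_step_pos n
  rcases step_eq_or_eq_neg_direction hne h with h' | h' <;> rw [h'] at this ⊢ <;>
    simpa [neg_div, div_self t'.direction_ne_zero] using this

variable {t t'} in
lemma strictMonoOn_height_direction_mul_offset (hne : range t.seq ≠ range t'.seq) {n n' : ℤ}
    (h : t.seq n = t'.seq n') :
    StrictMonoOn (fun τ => t.height t'.direction * offset t t' τ) (Ioo n (n + 1)) := by
  intro x hx y hy hxy
  simp only [offset_eq hne h hx.1.le hx.2, offset_eq hne h hy.1.le hy.2]
  nlinarith [re_step_div_direction_mul_height_pos hne h]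

variable {t t'} in
theorem subsingleton_range_inter (hne : range t.seq ≠ range t'.seq) :
    (range t.seq ∩ range t'.seq).Subsingleton := by
  rintro _ ⟨⟨a, rfl⟩, b, hab⟩ _ ⟨⟨c, rfl⟩, d, hcd⟩
  have hσ : t.height t'.direction ≠ 0 := fun h₀ => by
    simpa [h₀] using re_step_div_direction_mul_height_pos hne hab.symm
  have hzeros := Continuous.subsingleton_zeros (f := fun τ => t.height t'.direction * offset t t' τ)
    (continuous_const.mul (continuous_offset t t')) fun z hz => by
    obtain ⟨n, n', hn, rfl⟩ :=
      exists_seq_eq_of_offset_eq_zero hne ((mul_eq_zero.1 hz).resolve_left hσ)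
    exact ⟨_, Ioo_mem_nhds (by linarith) (by linarith),
      strictMonoOn_height_direction_mul_offset hne hn⟩
  have := hzeros (show t.height t'.direction * offset t t' (a + 1 / 2) = 0 by
      rw [offset_add_half hab.symm, mul_zero])
    (show t.height t'.direction * offset t t' (c + 1 / 2) = 0 by
      rw [offset_add_half hcd.symm, mul_zero])
  rw [add_left_inj, Int.cast_inj] at this
  rw [this]

end TrainTrack

/-- A train-track of a rhombus tiling of the plane cannot cross itself (it never visits
the same rhombus twice), and two distinct train-tracks cross at most once (they share at
most one rhombus). -/
theorem train_track_crossings (T : RhombusTiling) :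
    (∀ t : TrainTrack T, Function.Injective t.seq) ∧
    (∀ t t' : TrainTrack T, Set.range t.seq ≠ Set.range t'.seq →
      (Set.range t.seq ∩ Set.range t'.seq).Subsingleton) :=
  ⟨TrainTrack.injective_seq, fun _ _ => TrainTrack.subsingleton_range_inter⟩
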